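/- For every d ≥ 2, there exists a triangle-free graph with maximum degree at most d, matching number exactly d, and exactly d² + 1 edges; namely the graph A_d obtained from a 5-cycle v₁v₂v₃v₄v₅ by replacing v₁ and v₂ each with an independent set of size d−1 and replacing edges incident to the replaced vertices by complete joins. -/

import Mathlib

/-- The matching number of a simple graph: the largest size of a matching. -/
noncomputable def matchingNumber {V : Type*} (G : SimpleGraph V) : ℕ :=
  sSup {n | ∃ M : G.Subgraph, M.IsMatching ∧ M.edgeSet.ncard = n}

/-- Vertex set of `A_d`: two independent sets `S₁`, `S₂` of size `d-1`
(replacing `v₁` and `v₂` of a 5-cycle) together with the vertices `v₃, v₄, v₅`. -/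
abbrev AVert (d : ℕ) : Type := Fin (d - 1) ⊕ (Fin (d - 1) ⊕ Fin 3)

/-- Base relation for `A_d`: all pairs between `S₁` and `S₂`, all pairs between
`S₂` and `v₃`, the edges `v₃v₄` and `v₄v₅`, and all pairs between `v₅` and `S₁`. -/
def ARel (d : ℕ) : AVert d → AVert d → Prop
  | Sum.inl _, Sum.inr (Sum.inl _) => True
  | Sum.inr (Sum.inl _), Sum.inr (Sum.inr ⟨0, _⟩) => True
  | Sum.inr (Sum.inr ⟨0, _⟩), Sum.inr (Sum.inr ⟨1, _⟩) => True
  | Sum.inr (Sum.inr ⟨1, _⟩), Sum.inr (Sum.inr ⟨2, _⟩) => True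
  | Sum.inr (Sum.inr ⟨2, _⟩), Sum.inl _ => True
  | _, _ => False

/-- The graph `A_d`, a blown-up 5-cycle. -/
def AGraph (d : ℕ) : SimpleGraph (AVert d) := SimpleGraph.fromRel (ARel d)

noncomputable instance (d : ℕ) : DecidableRel (AGraph d).Adj :=
  Classical.decRel _

/-!
`A_d` maps homomorphically onto the 5-cycle (`S₁ ↦ 0`, `S₂ ↦ 1`, `vₖ ↦ k - 1`), so it is
triangle-free. Every vertex other than `v₄` has degree `d` and `v₄` has degree 2, so the handshake
lemma gives `2 |E| = 2d · d + 2`. A matching with `m` edges covers `2m` of the `2d + 1` vertices,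
so `m ≤ d`, and pairing `S₁` with `S₂` and `v₃` with `v₄` gives a matching with `d` edges.
-/

open SimpleGraph Finset Function

theorem SimpleGraph.CliqueFree.of_hom {V W : Type*} {G : SimpleGraph V} {H : SimpleGraph W}
    {n : ℕ} (f : G →g H) (h : H.CliqueFree n) : G.CliqueFree n := by
  rw [cliqueFree_iff] at h ⊢
  exact ⟨fun c => h.false ((f.comp c.toHom).toCopy (Hom.injective_of_top_hom _))⟩

theorem SimpleGraph.cycleGraph_five_cliqueFree_three : (cycleGraph 5).CliqueFree 3 :=
  cliqueFinset_eq_empty_iff.mp (by decide)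

namespace SimpleGraph.Subgraph

variable {V : Type*} {G : SimpleGraph V} {M : G.Subgraph}

theorem IsMatching.ncard_verts_eq_two_mul [Finite V] (hM : M.IsMatching) :
    M.verts.ncard = 2 * M.edgeSet.ncard := by
  classical
  have := Fintype.ofFinite V
  have hedges : M.edgeSet.ncard = M.coe.edgeFinset.card := by
    rw [← M.image_coe_edgeSet_coe,
      Set.ncard_image_of_injective _ (Sym2.map.injective Subtype.val_injective),
      Set.ncard_eq_toFinset_card', edgeFinset]
  have hdeg (v : M.verts) [Fintype (M.coe.neighborSet v)] : M.coe.degree v = 1 := by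
    rw [M.coe_degree]
    convert isMatching_iff_forall_degree.mp hM v v.2
  rw [hedges, ← sum_degrees_eq_twice_card_edges]
  simp only [hdeg, sum_const, card_univ, smul_eq_mul, mul_one]
  rw [Set.ncard_eq_toFinset_card', Set.toFinset_card]

theorem IsMatching.two_mul_ncard_edgeSet_le [Finite V] (hM : M.IsMatching) :
    2 * M.edgeSet.ncard ≤ Nat.card V := by
  rw [← hM.ncard_verts_eq_two_mul, ← Set.ncard_univ]
  exact Set.ncard_le_ncard (Set.subset_univ _)

end SimpleGraph.Subgraph

theorem SimpleGraph.exists_isMatching_ncard_edgeSet_eq {V ι : Type*} [Finite V] [Fintype ι]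
    {G : SimpleGraph V} (f g : ι ↪ V) (hfg : ∀ i j, f i ≠ g j)
    (hadj : ∀ i, G.Adj (f i) (g i)) :
    ∃ M : G.Subgraph, M.IsMatching ∧ M.edgeSet.ncard = Fintype.card ι := by
  have hdisj : Disjoint (Set.range f) (Set.range g) := Set.disjoint_range_iff.mpr hfg
  obtain ⟨M, hverts, hM⟩ := Subgraph.IsMatching.exists_of_disjoint_sets_of_equiv hdisj
    ((Equiv.ofInjective f f.injective).symm.trans (Equiv.ofInjective g g.injective))
    (by rintro ⟨_, i, rfl⟩; simpa using hadj i)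
  refine ⟨M, hM, ?_⟩
  have := hM.ncard_verts_eq_two_mul
  rw [hverts, Set.ncard_union_eq hdisj, Set.ncard_range_of_injective f.injective,
    Set.ncard_range_of_injective g.injective, Nat.card_eq_fintype_card] at this
  omega

namespace AGraph

variable {d : ℕ}

def toCycle : AVert d → Fin 5
  | Sum.inl _ => 0
  | Sum.inr (Sum.inl _) => 1
  | Sum.inr (Sum.inr k) => Fin.natAdd 2 k

theorem cycleGraph_adj_toCycle {u v : AVert d} (h : ARel d u v) :
    (cycleGraph 5).Adj (toCycle u) (toCycle v) := by
  rcases u with i | i | k <;> rcases v with j | j | m <;> (try fin_cases k) <;>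
    (try fin_cases m) <;> first | exact h.elim | (simp only [toCycle]; decide)

def toCycleHom (d : ℕ) : AGraph d →g cycleGraph 5 where
  toFun := toCycle
  map_rel' := by
    rintro u v ⟨-, h | h⟩
    exacts [cycleGraph_adj_toCycle h, (cycleGraph_adj_toCycle h).symm]

theorem cliqueFree_three (d : ℕ) : (AGraph d).CliqueFree 3 :=
  cycleGraph_five_cliqueFree_three.of_hom (toCycleHom d)

-- `Sum.inr (Sum.inr k)` is the vertex `v_{k+3}`. These edges are stated separately because `simp`
-- cannot reduce the `match` in `ARel` against numerals such as `(2 : Fin 3)`.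
@[simp] theorem aRel_inl_inr_inl (i j : Fin (d - 1)) :
    ARel d (Sum.inl i) (Sum.inr (Sum.inl j)) := trivial

@[simp] theorem aRel_inr_inl_v₃ (i : Fin (d - 1)) :
    ARel d (Sum.inr (Sum.inl i)) (Sum.inr (Sum.inr 0)) := trivial

@[simp] theorem aRel_v₃_v₄ : ARel d (Sum.inr (Sum.inr 0)) (Sum.inr (Sum.inr 1)) := trivial

@[simp] theorem aRel_v₄_v₅ : ARel d (Sum.inr (Sum.inr 1)) (Sum.inr (Sum.inr 2)) := trivial

@[simp] theorem aRel_v₅_inl (i : Fin (d - 1)) :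
    ARel d (Sum.inr (Sum.inr 2)) (Sum.inl i) := trivial

theorem neighborFinset_inl (i : Fin (d - 1)) : (AGraph d).neighborFinset (Sum.inl i) =
    insert (Sum.inr (Sum.inr 2)) (univ.map (Embedding.inl.trans Embedding.inr)) := by
  ext w; rw [mem_neighborFinset]
  rcases w with j | j | k <;> (try fin_cases k) <;> simp [AGraph] <;> simp [ARel]

theorem neighborFinset_inr_inl (i : Fin (d - 1)) :
    (AGraph d).neighborFinset (Sum.inr (Sum.inl i)) =
      insert (Sum.inr (Sum.inr 0)) (univ.map Embedding.inl) := by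
  ext w; rw [mem_neighborFinset]
  rcases w with j | j | k <;> (try fin_cases k) <;> simp [AGraph] <;> simp [ARel]

theorem neighborFinset_v₃ : (AGraph d).neighborFinset (Sum.inr (Sum.inr 0)) =
    insert (Sum.inr (Sum.inr 1)) (univ.map (Embedding.inl.trans Embedding.inr)) := by
  ext w; rw [mem_neighborFinset]
  rcases w with j | j | k <;> (try fin_cases k) <;> simp [AGraph] <;> simp [ARel]

theorem neighborFinset_v₄ : (AGraph d).neighborFinset (Sum.inr (Sum.inr 1)) =
    {Sum.inr (Sum.inr 0), Sum.inr (Sum.inr 2)} := by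
  ext w; rw [mem_neighborFinset]
  rcases w with j | j | k <;> (try fin_cases k) <;> simp [AGraph] <;> simp [ARel]

theorem neighborFinset_v₅ : (AGraph d).neighborFinset (Sum.inr (Sum.inr 2)) =
    insert (Sum.inr (Sum.inr 1)) (univ.map Embedding.inl) := by
  ext w; rw [mem_neighborFinset]
  rcases w with j | j | k <;> (try fin_cases k) <;> simp [AGraph] <;> simp [ARel]

theorem degree_v₄ : (AGraph d).degree (Sum.inr (Sum.inr 1)) = 2 := by
  rw [← card_neighborFinset_eq_degree, neighborFinset_v₄, card_pair (by simp)]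

theorem degree_of_ne_v₄ (hd : 1 ≤ d) {v : AVert d} (hv : v ≠ Sum.inr (Sum.inr 1)) :
    (AGraph d).degree v = d := by
  have hcard (x : AVert d) (e : Fin (d - 1) ↪ AVert d) (hx : ∀ i, e i ≠ x) :
      (insert x (univ.map e)).card = d := by
    rw [card_insert_of_notMem (by simpa using hx), card_map, card_univ, Fintype.card_fin]
    omega
  rw [← card_neighborFinset_eq_degree]
  rcases v with i | i | k
  · rw [neighborFinset_inl]; exact hcard _ _ (by simp)
  · rw [neighborFinset_inr_inl]; exact hcard _ _ (by simp)
  · match k with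
    | 0 => rw [neighborFinset_v₃]; exact hcard _ _ (by simp)
    | 1 => exact absurd rfl hv
    | 2 => rw [neighborFinset_v₅]; exact hcard _ _ (by simp)

theorem card_eq : Fintype.card (AVert d) = d - 1 + (d - 1 + 3) := by
  simp only [Fintype.card_sum, Fintype.card_fin]

theorem card_edgeFinset (hd : 1 ≤ d) : (AGraph d).edgeFinset.card = d ^ 2 + 1 := by
  have hsum : 2 * (AGraph d).edgeFinset.card = 2 + 2 * (d * d) := calc
    _ = ∑ v, (AGraph d).degree v := (sum_degrees_eq_twice_card_edges _).symm
    _ = 2 + ∑ _v ∈ univ.erase (Sum.inr (Sum.inr 1) : AVert d), d := by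
      rw [← add_sum_erase _ _ (mem_univ _), degree_v₄,
        sum_congr rfl fun v hv => degree_of_ne_v₄ hd (ne_of_mem_erase hv)]
    _ = 2 + 2 * (d * d) := by
      rw [sum_const, card_erase_of_mem (mem_univ _), card_univ, card_eq, smul_eq_mul]
      rw [show d - 1 + (d - 1 + 3) - 1 = 2 * d by omega, mul_assoc]
  rw [sq]
  omega

theorem exists_isMatching_ncard_edgeSet_eq (hd : 1 ≤ d) :
    ∃ M : (AGraph d).Subgraph, M.IsMatching ∧ M.edgeSet.ncard = d := by
  obtain ⟨M, hM, hcard⟩ := SimpleGraph.exists_isMatching_ncard_edgeSet_eq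
    (G := AGraph d) (Embedding.inl.optionElim (Sum.inr (Sum.inr 0)) (by simp))
    ((Embedding.inl.trans Embedding.inr).optionElim (Sum.inr (Sum.inr 1)) (by simp))
    (by rintro (_ | i) (_ | j) <;> simp) (by rintro (_ | i) <;> simp [AGraph])
  refine ⟨M, hM, ?_⟩
  rw [hcard, Fintype.card_option, Fintype.card_fin]
  omega

theorem matchingNumber_eq (hd : 1 ≤ d) : matchingNumber (AGraph d) = d := by
  refine IsGreatest.csSup_eq ⟨exists_isMatching_ncard_edgeSet_eq hd, ?_⟩
  rintro _ ⟨M, hM, rfl⟩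
  have := hM.two_mul_ncard_edgeSet_le
  rw [Nat.card_eq_fintype_card, card_eq] at this
  omega

end AGraph

theorem stmt16 (d : ℕ) (hd : 2 ≤ d) :
    (AGraph d).CliqueFree 3 ∧
      (∀ v : AVert d, (AGraph d).degree v ≤ d) ∧
      matchingNumber (AGraph d) = d ∧
      (AGraph d).edgeFinset.card = d ^ 2 + 1 := by
  have hd₁ : 1 ≤ d := by omega
  refine ⟨AGraph.cliqueFree_three d, fun v => ?_, AGraph.matchingNumber_eq hd₁,
    AGraph.card_edgeFinset hd₁⟩
  by_cases hv : v = Sum.inr (Sum.inr 1)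
  · rw [hv, AGraph.degree_v₄]
    exact hd
  · rw [AGraph.degree_of_ne_v₄ hd₁ hv]
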